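/- The restriction of M to odd positive integers is injective: if x and x' are odd positive integers with M(x) = M(x'), then x = x'. -/
import Mathlib


noncomputable def Mmap (x : ℕ) : ℝ := (x : ℝ) / 2 ^ (Nat.log 2 x + 1)

theorem Mmap_injective_on_odds (x x' : ℕ) (hx : 0 < x) (hx' : 0 < x')
    (hox : Odd x) (hox' : Odd x') (h : Mmap x = Mmap x') : x = x' := by
  unfold Mmap at h
  set a := Nat.log 2 x with ha
  set b := Nat.log 2 x' with hb
  have h2 : (x : ℝ) * 2 ^ (b + 1) = (x' : ℝ) * 2 ^ (a + 1) := by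
    field_simp at h
    linarith [h]
  have hN : x * 2 ^ (b + 1) = x' * 2 ^ (a + 1) := by exact_mod_cast h2
  have hdx : ¬ (2 ∣ x) := by
    intro hd; exact (Nat.not_even_iff_odd.mpr hox) (even_iff_two_dvd.mpr hd)
  have hdx' : ¬ (2 ∣ x') := by
    intro hd; exact (Nat.not_even_iff_odd.mpr hox') (even_iff_two_dvd.mpr hd)
  have hfx : x.factorization 2 = 0 := Nat.factorization_eq_zero_of_not_dvd hdx
  have hfx' : x'.factorization 2 = 0 := Nat.factorization_eq_zero_of_not_dvd hdx'
  have hval : b + 1 = a + 1 := by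
    have := congrArg (fun n => n.factorization 2) hN
    simp [Nat.factorization_mul hx.ne' (by positivity : (2:ℕ)^(b+1) ≠ 0),
      Nat.factorization_mul hx'.ne' (by positivity : (2:ℕ)^(a+1) ≠ 0),
      Nat.factorization_pow, Nat.Prime.factorization_self Nat.prime_two,
      hfx, hfx'] at this
    omega
  rw [hval] at hN
  exact Nat.eq_of_mul_eq_mul_right (by positivity) hN
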